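/- Let $f: \mathbb{D} \to M_n(\mathbb{C})^d$ be analytic with $f(0) = 0$, and suppose $\rho(f(z)) < 1$ for every $z$ in the open unit disc $\mathbb{D}$, where $\rho$ is the joint spectral radius. Then $\rho(f(z)) \le |z|$ for all $z \in \mathbb{D}$, and $\rho(f'(0)) \le 1$. -/

import Mathlib

open scoped Matrix ComplexOrder Matrix.Norms.L2Operator

/-- The completely positive map `Ψ_X(T) = ∑ⱼ Xⱼ T Xⱼ*` associated to a `d`-tuple of matrices. -/
noncomputable def Psi {d : ℕ} {N : Type*} [Fintype N] [DecidableEq N]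
    (X : Fin d → Matrix N N ℂ) (T : Matrix N N ℂ) : Matrix N N ℂ :=
  ∑ j, X j * T * (X j)ᴴ

/-- The joint spectral radius `ρ(X) = lim_k ‖Ψ_X^k(I)‖^(1/(2k))`. -/
noncomputable def jsr {d : ℕ} {N : Type*} [Fintype N] [DecidableEq N]
    (X : Fin d → Matrix N N ℂ) : ℝ :=
  Filter.limsup (fun k : ℕ => ‖(Psi X)^[k] 1‖ ^ (1 / (2 * (k : ℝ)))) Filter.atTop

/-!
Let `B_k(X)` be the block row of all products `X_{w₁} ⋯ X_{w_k}`. Then `Ψ_X^k(I) = B_k B_kᴴ`,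
so `ρ(X) = limsup ‖B_k(X)‖^{1/k}`, and `k ↦ ‖B_k(X)‖` is submultiplicative (Ψ_X is a positive
map), so by Fekete `ρ(X) ≤ ‖B_k(X)‖^{1/k}` for every `k ≥ 1`. Unlike `Ψ_X^k(I)`, `B_k(X)` is a
polynomial in `X`, homogeneous of degree `k`.

Write `f z = z • g z`. For `r < 1`, compactness of the closed disc of radius `r` gives a single
`k` with `‖B_k(f ζ)‖ < 1` on it, hence `‖B_k(g ζ)‖ ≤ r⁻ᵏ` on the circle `|ζ| = r`, and by the
maximum modulus principle on the whole disc. Thus `ρ(g z) ≤ 1/r` and `ρ(f z) ≤ |z|/r`; let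
`r → 1`, noting `g 0 = f'(0)`.
-/

open Filter Metric Set Topology
open scoped MatrixOrder

section Submultiplicative

variable {u : ℕ → ℝ}

theorem le_pow_mul_of_submultiplicative (hu : ∀ a b, u (a + b) ≤ u a * u b)
    (hu0 : ∀ m, 0 ≤ u m) (k q r : ℕ) : u (k * q + r) ≤ u k ^ q * u r := by
  induction q with
  | zero => simp
  | succ q ih =>
    calc u (k * (q + 1) + r) = u (k + (k * q + r)) := by ring_nf
      _ ≤ u k * u (k * q + r) := hu _ _
      _ ≤ u k * (u k ^ q * u r) := by gcongr; exact hu0 k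
      _ = u k ^ (q + 1) * u r := by ring

theorem lt_one_of_dvd_of_submultiplicative (hu : ∀ a b, u (a + b) ≤ u a * u b)
    (hu0 : ∀ m, 0 ≤ u m) {k m : ℕ} (hkm : k ∣ m) (hm : m ≠ 0) (hk : u k < 1) : u m < 1 := by
  obtain ⟨q, rfl⟩ := hkm
  obtain ⟨q, rfl⟩ := Nat.exists_eq_succ_of_ne_zero (right_ne_zero_of_mul hm)
  calc u (k * (q + 1)) = u (k * q + k) := by ring_nf
    _ ≤ u k ^ q * u k := le_pow_mul_of_submultiplicative hu hu0 k q k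
    _ < 1 := by rw [← pow_succ]; exact pow_lt_one₀ (hu0 k) hk q.succ_ne_zero

/-- Fekete's lemma for submultiplicative sequences. -/
theorem eventually_rpow_one_div_lt_of_submultiplicative (hu : ∀ a b, u (a + b) ≤ u a * u b)
    (hu0 : ∀ m, 0 ≤ u m) {k : ℕ} (hk : k ≠ 0) {b : ℝ} (hb : u k ^ (1 / (k : ℝ)) < b) :
    ∀ᶠ m in atTop, u m ^ (1 / (m : ℝ)) < b := by
  obtain ⟨c, hkc, hcb⟩ := exists_between hb
  have hc : 0 < c := (Real.rpow_nonneg (hu0 k) _).trans_lt hkc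
  have hukc : u k ≤ c ^ k := by
    have := pow_le_pow_left₀ (Real.rpow_nonneg (hu0 k) _) hkc.le k
    rwa [one_div, Real.rpow_inv_natCast_pow (hu0 k) hk] at this
  set C := 1 + ∑ r ∈ Finset.range k, u r / c ^ r
  have hC : 0 < C :=
    add_pos_of_pos_of_nonneg one_pos
      (Finset.sum_nonneg fun r _ => div_nonneg (hu0 r) (by positivity))
  have hbound (m : ℕ) : u m ≤ C * c ^ m := by
    have hr : m % k ∈ Finset.range k := Finset.mem_range.2 (Nat.mod_lt _ (Nat.pos_of_ne_zero hk))
    calc u m = u (k * (m / k) + m % k) := by rw [Nat.div_add_mod]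
      _ ≤ u k ^ (m / k) * u (m % k) := le_pow_mul_of_submultiplicative hu hu0 _ _ _
      _ ≤ (c ^ k) ^ (m / k) * u (m % k) := by gcongr; exacts [hu0 _, hu0 _]
      _ = u (m % k) / c ^ (m % k) * c ^ m := by
        have hm : c ^ m = c ^ (k * (m / k)) * c ^ (m % k) := by rw [← pow_add, Nat.div_add_mod]
        rw [← pow_mul, hm]; field_simp
      _ ≤ C * c ^ m := by
        gcongr
        exact (Finset.single_le_sum (fun r _ => div_nonneg (hu0 r) (by positivity)) hr).trans
          (le_add_of_nonneg_left zero_le_one)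
  have hlim : Tendsto (fun m : ℕ => C ^ (1 / (m : ℝ)) * c) atTop (𝓝 c) := by
    simpa using ((tendsto_const_nhds (x := C)).rpow tendsto_one_div_atTop_nhds_zero_nat
      (Or.inl hC.ne')).mul_const c
  filter_upwards [hlim.eventually_lt_const hcb, eventually_ne_atTop 0] with m hm hm0
  calc u m ^ (1 / (m : ℝ)) ≤ (C * c ^ m) ^ (1 / (m : ℝ)) :=
        Real.rpow_le_rpow (hu0 m) (hbound m) (by positivity)
    _ = C ^ (1 / (m : ℝ)) * c := by
        rw [Real.mul_rpow hC.le (by positivity), one_div, Real.pow_rpow_inv_natCast hc.le hm0]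
    _ < b := hm

theorem isBoundedUnder_rpow_one_div_of_submultiplicative (hu : ∀ a b, u (a + b) ≤ u a * u b)
    (hu0 : ∀ m, 0 ≤ u m) : IsBoundedUnder (· ≤ ·) atTop fun m => u m ^ (1 / (m : ℝ)) :=
  isBoundedUnder_of_eventually_le <|
    (eventually_rpow_one_div_lt_of_submultiplicative hu hu0 one_ne_zero (lt_add_one _)).mono
      fun _ => le_of_lt

theorem limsup_rpow_one_div_le_of_submultiplicative (hu : ∀ a b, u (a + b) ≤ u a * u b)
    (hu0 : ∀ m, 0 ≤ u m) {k : ℕ} (hk : k ≠ 0) :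
    limsup (fun m => u m ^ (1 / (m : ℝ))) atTop ≤ u k ^ (1 / (k : ℝ)) :=
  le_of_forall_gt_imp_ge_of_dense fun _ hb =>
    limsup_le_of_le (isCoboundedUnder_le_of_le atTop fun m => Real.rpow_nonneg (hu0 m) _)
      ((eventually_rpow_one_div_lt_of_submultiplicative hu hu0 hk hb).mono fun _ => le_of_lt)

end Submultiplicative

theorem le_of_forall_mem_Ioo_le_div {a b s : ℝ} (hs : s < 1) (h : ∀ r ∈ Ioo s 1, a ≤ b / r) :
    a ≤ b := by
  have hlim : Tendsto (fun r => b / r) (𝓝[<] 1) (𝓝 b) := by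
    simpa using (ContinuousAt.tendsto (f := fun r : ℝ => b / r) (x := 1)
      (by fun_prop (disch := norm_num))).mono_left nhdsWithin_le_nhds
  exact ge_of_tendsto hlim (eventually_of_mem (Ioo_mem_nhdsLT hs) h)

section Words

variable {ι M : Type*} [Monoid M]

def wordProd (X : ι → M) {k : ℕ} (w : Fin k → ι) : M :=
  ((List.ofFn w).map X).prod

theorem wordProd_cons (X : ι → M) {k : ℕ} (j : ι) (w : Fin k → ι) :
    wordProd X (Fin.cons j w) = X j * wordProd X w := by
  simp [wordProd, List.ofFn_succ]

theorem wordProd_smul {R : Type*} [Monoid R] [MulAction R M] [IsScalarTower R M M]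
    [SMulCommClass R M M] (c : R) (X : ι → M) {k : ℕ} (w : Fin k → ι) :
    wordProd (c • X) w = c ^ k • wordProd X w := by
  have := List.smul_prod ((List.ofFn w).map X) c
  simp only [List.length_map, List.length_ofFn, List.map_map] at this
  exact this.symm

theorem differentiable_wordProd {𝔸 : Type*} [NormedRing 𝔸] [NormedAlgebra ℂ 𝔸] [Finite ι]
    {k : ℕ} (w : Fin k → ι) : Differentiable ℂ fun X : ι → 𝔸 => wordProd X w :=
  fun _ => hasStrictFDerivAt_list_prod'.differentiableAt

end Words

section WordRow

variable {d : ℕ} {N : Type*} [Fintype N] [DecidableEq N]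

def rowOfBlocks (R : Type*) [CommSemiring R] (m n ι : Type*) :
    (ι → Matrix m n R) →ₗ[R] Matrix m (ι × n) R where
  toFun A := Matrix.of fun i p => A p.1 i p.2
  map_add' _ _ := rfl
  map_smul' _ _ := rfl

@[simp]
theorem rowOfBlocks_apply {R m n ι : Type*} [CommSemiring R] (A : ι → Matrix m n R) (i : m)
    (p : ι × n) : rowOfBlocks R m n ι A i p = A p.1 i p.2 :=
  rfl

noncomputable def wordRow (X : Fin d → Matrix N N ℂ) (k : ℕ) :
    Matrix N ((Fin k → Fin d) × N) ℂ :=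
  rowOfBlocks ℂ N N _ fun w => wordProd X w

theorem Psi_iterate_one_eq_sum (X : Fin d → Matrix N N ℂ) (k : ℕ) :
    (Psi X)^[k] 1 = ∑ w : Fin k → Fin d, wordProd X w * (wordProd X w)ᴴ := by
  induction k with
  | zero => simp [wordProd]
  | succ k ih =>
    rw [Function.iterate_succ_apply', ih, ← (Fin.consEquiv fun _ => Fin d).sum_comp,
      Fintype.sum_prod_type]
    refine Finset.sum_congr rfl fun j _ => ?_
    rw [Finset.mul_sum, Finset.sum_mul]
    refine Finset.sum_congr rfl fun w _ => ?_
    change _ = wordProd X (Fin.cons j w) * (wordProd X (Fin.cons j w))ᴴ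
    rw [wordProd_cons, Matrix.conjTranspose_mul]
    noncomm_ring

theorem wordRow_mul_conjTranspose (X : Fin d → Matrix N N ℂ) (k : ℕ) :
    wordRow X k * (wordRow X k)ᴴ = (Psi X)^[k] 1 := by
  ext i i'
  simp [Psi_iterate_one_eq_sum, Matrix.mul_apply, Matrix.sum_apply, Fintype.sum_prod_type,
    wordRow]

theorem norm_Psi_iterate_one (X : Fin d → Matrix N N ℂ) (k : ℕ) :
    ‖(Psi X)^[k] 1‖ = ‖wordRow X k‖ ^ 2 := by
  rw [← wordRow_mul_conjTranspose, ← Matrix.l2_opNorm_conjTranspose (wordRow X k), sq,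
    ← Matrix.l2_opNorm_conjTranspose_mul_self, Matrix.conjTranspose_conjTranspose]

theorem jsr_eq_limsup_norm_wordRow (X : Fin d → Matrix N N ℂ) :
    jsr X = limsup (fun k => ‖wordRow X k‖ ^ (1 / (k : ℝ))) atTop := by
  refine congrArg (limsup · atTop) (funext fun k => ?_)
  rw [norm_Psi_iterate_one, ← Real.rpow_natCast, ← Real.rpow_mul (norm_nonneg _)]
  congr 1
  ring

theorem wordRow_smul (c : ℂ) (X : Fin d → Matrix N N ℂ) (k : ℕ) :
    wordRow (c • X) k = c ^ k • wordRow X k := by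
  simp only [wordRow, wordProd_smul, ← map_smul]
  rfl

theorem differentiable_wordRow (k : ℕ) :
    Differentiable ℂ fun X : Fin d → Matrix N N ℂ => wordRow X k :=
  (LinearMap.toContinuousLinearMap (rowOfBlocks ℂ N N _)).differentiable.comp
    (differentiable_pi.2 fun w => differentiable_wordProd w)

end WordRow

section Positivity

variable {d : ℕ} {N : Type*} [Fintype N] [DecidableEq N]

theorem Psi_mono (X : Fin d → Matrix N N ℂ) : Monotone (Psi X) := fun _ _ h =>
  Finset.sum_le_sum fun j _ => star_right_conjugate_le_conjugate h (X j)

noncomputable def psiLinearMap (X : Fin d → Matrix N N ℂ) : Module.End ℂ (Matrix N N ℂ) where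
  toFun := Psi X
  map_add' _ _ := by simp [Psi, Matrix.mul_add, Matrix.add_mul, Finset.sum_add_distrib]
  map_smul' _ _ := by simp [Psi, Finset.smul_sum]

noncomputable def psiIterate (X : Fin d → Matrix N N ℂ) (k : ℕ) :
    Matrix N N ℂ →ₚ[ℂ] Matrix N N ℂ where
  toLinearMap := psiLinearMap X ^ k
  monotone' := by
    change Monotone ⇑(psiLinearMap X ^ k)
    rw [Module.End.coe_pow]
    exact (Psi_mono X).iterate k

theorem psiIterate_apply (X : Fin d → Matrix N N ℂ) (k : ℕ) (T : Matrix N N ℂ) :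
    psiIterate X k T = (Psi X)^[k] T :=
  Module.End.pow_apply (psiLinearMap X) k T

theorem norm_wordRow_add_le (X : Fin d → Matrix N N ℂ) (a b : ℕ) :
    ‖wordRow X (a + b)‖ ≤ ‖wordRow X a‖ * ‖wordRow X b‖ := by
  have hPsi : ‖(Psi X)^[a + b] 1‖ ≤ ‖(Psi X)^[a] 1‖ * ‖(Psi X)^[b] 1‖ := by
    have h := (psiIterate X a).norm_apply_le_of_nonneg _ ((psiIterate X b).map_nonneg zero_le_one)
    rwa [psiIterate_apply, psiIterate_apply, psiIterate_apply, ← Function.iterate_add_apply]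
      at h
  rw [norm_Psi_iterate_one, norm_Psi_iterate_one, norm_Psi_iterate_one, ← mul_pow] at hPsi
  exact (pow_le_pow_iff_left₀ (norm_nonneg _) (by positivity) two_ne_zero).1 hPsi

end Positivity

section JointSpectralRadius

variable {d : ℕ} {N : Type*} [Fintype N] [DecidableEq N]

theorem jsr_le_rpow_norm_wordRow (X : Fin d → Matrix N N ℂ) {k : ℕ} (hk : k ≠ 0) :
    jsr X ≤ ‖wordRow X k‖ ^ (1 / (k : ℝ)) := by
  rw [jsr_eq_limsup_norm_wordRow]
  exact limsup_rpow_one_div_le_of_submultiplicative (norm_wordRow_add_le X)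
    (fun _ => norm_nonneg _) hk

theorem jsr_le_of_norm_wordRow_le {X : Fin d → Matrix N N ℂ} {k : ℕ} (hk : k ≠ 0) {c : ℝ}
    (hc : 0 ≤ c) (h : ‖wordRow X k‖ ≤ c ^ k) : jsr X ≤ c :=
  calc jsr X ≤ ‖wordRow X k‖ ^ (1 / (k : ℝ)) := jsr_le_rpow_norm_wordRow X hk
    _ ≤ (c ^ k) ^ (1 / (k : ℝ)) := by gcongr
    _ = c := by rw [one_div, Real.pow_rpow_inv_natCast hc hk]

theorem exists_norm_wordRow_lt_one {X : Fin d → Matrix N N ℂ} (h : jsr X < 1) :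
    ∃ k ≠ 0, ‖wordRow X k‖ < 1 := by
  rw [jsr_eq_limsup_norm_wordRow] at h
  obtain ⟨k, hk, hk0⟩ := ((eventually_lt_of_limsup_lt h
    (isBoundedUnder_rpow_one_div_of_submultiplicative (norm_wordRow_add_le X)
      fun _ => norm_nonneg _)).and (eventually_ne_atTop 0)).exists
  refine ⟨k, hk0, lt_of_not_ge fun h1 => hk.not_ge ?_⟩
  exact Real.one_le_rpow h1 (by positivity)

theorem norm_wordRow_lt_one_of_dvd {X : Fin d → Matrix N N ℂ} {k m : ℕ} (hkm : k ∣ m)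
    (hm : m ≠ 0) (hk : ‖wordRow X k‖ < 1) : ‖wordRow X m‖ < 1 :=
  lt_one_of_dvd_of_submultiplicative (norm_wordRow_add_le X) (fun _ => norm_nonneg _) hkm hm hk

theorem IsCompact.exists_forall_norm_wordRow_lt_one {Z : Type*} [TopologicalSpace Z]
    {f : Z → Fin d → Matrix N N ℂ} {U K : Set Z} (hK : IsCompact K) (hU : IsOpen U)
    (hKU : K ⊆ U) (hf : ContinuousOn f U) (hρ : ∀ z ∈ K, jsr (f z) < 1) :
    ∃ k ≠ 0, ∀ z ∈ K, ‖wordRow (f z) k‖ < 1 := by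
  -- indexing by factorials makes the cover increasing, as `k ∣ j !` for `k ≤ j`
  set V : ℕ → Set Z := fun j => U ∩ f ⁻¹' {X | ‖wordRow X j.factorial‖ < 1}
  have hV_open (j : ℕ) : IsOpen (V j) :=
    hf.isOpen_inter_preimage hU
      (isOpen_lt (differentiable_wordRow _).continuous.norm continuous_const)
  have hV_mono : Monotone V := fun i j hij z hz =>
    ⟨hz.1, norm_wordRow_lt_one_of_dvd (Nat.factorial_dvd_factorial hij) j.factorial_ne_zero hz.2⟩
  have hKV : K ⊆ ⋃ j, V j := fun z hz => by
    obtain ⟨k, hk0, hk⟩ := exists_norm_wordRow_lt_one (hρ z hz)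
    exact mem_iUnion.2 ⟨k, hKU hz, norm_wordRow_lt_one_of_dvd
      (Nat.dvd_factorial (Nat.pos_of_ne_zero hk0) le_rfl) k.factorial_ne_zero hk⟩
  obtain ⟨j, hj⟩ := hK.elim_directed_cover V hV_open hKV hV_mono.directed_le
  exact ⟨j.factorial, j.factorial_ne_zero, fun z hz => (hj hz).2⟩

end JointSpectralRadius

theorem exists_norm_wordRow_dslope_le {d : ℕ} {N : Type*} [Fintype N] [DecidableEq N]
    {f : ℂ → Fin d → Matrix N N ℂ} (hf : DifferentiableOn ℂ f (ball 0 1)) (hf0 : f 0 = 0)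
    (hρ : ∀ z ∈ ball (0 : ℂ) 1, jsr (f z) < 1) {r : ℝ} (hr0 : 0 < r) (hr1 : r < 1) :
    ∃ k ≠ 0, ∀ z ∈ closedBall (0 : ℂ) r, ‖wordRow (dslope f 0 z) k‖ ≤ r⁻¹ ^ k := by
  have hr : closedBall (0 : ℂ) r ⊆ ball 0 1 := closedBall_subset_ball hr1
  obtain ⟨k, hk0, hk⟩ := (isCompact_closedBall (0 : ℂ) r).exists_forall_norm_wordRow_lt_one
    isOpen_ball hr hf.continuousOn fun z hz => hρ z (hr hz)
  have hg : DifferentiableOn ℂ ((fun X => wordRow X k) ∘ dslope f 0) (ball 0 1) :=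
    (differentiable_wordRow k).comp_differentiableOn
      ((Complex.differentiableOn_dslope (isOpen_ball.mem_nhds (mem_ball_self one_pos))).2 hf)
  refine ⟨k, hk0, fun z hz => ?_⟩
  refine Complex.norm_le_of_forall_mem_frontier_norm_le isBounded_ball (hg.diffContOnCl_ball hr)
    (fun ζ hζ => ?_) (by rwa [closure_ball _ hr0.ne'])
  rw [frontier_ball _ hr0.ne', mem_sphere_zero_iff_norm] at hζ
  have hfζ := hk ζ (sphere_subset_closedBall (mem_sphere_zero_iff_norm.2 hζ))
  rw [← sub_smul_dslope_of_zero hf0 ζ, sub_zero, wordRow_smul, norm_smul, norm_pow, hζ]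
    at hfζ
  rw [inv_pow]
  simpa using (le_inv_mul_iff₀ (c := r ^ k) (by positivity) (b := 1)).2 hfζ.le

/-- Schwarz lemma for the joint spectral radius: if `f : 𝔻 → Mₙ(ℂ)^d` is analytic,
`f(0) = 0`, and `ρ(f(z)) < 1` on the disc, then `ρ(f(z)) ≤ |z|` and `ρ(f'(0)) ≤ 1`. -/
theorem stmt_8 {d n : ℕ} (f : ℂ → (Fin d → Matrix (Fin n) (Fin n) ℂ))
    (hf : DifferentiableOn ℂ f (Metric.ball (0 : ℂ) 1))
    (hf0 : f 0 = 0)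
    (hρ : ∀ z ∈ Metric.ball (0 : ℂ) 1, jsr (f z) < 1) :
    (∀ z ∈ Metric.ball (0 : ℂ) 1, jsr (f z) ≤ ‖z‖) ∧
      jsr (deriv f 0) ≤ 1 := by
  refine ⟨fun z hz => ?_, ?_⟩
  · refine le_of_forall_mem_Ioo_le_div (mem_ball_zero_iff.1 hz) fun r hr => ?_
    have hr0 : 0 < r := (norm_nonneg z).trans_lt hr.1
    obtain ⟨k, hk0, hk⟩ := exists_norm_wordRow_dslope_le hf hf0 hρ hr0 hr.2
    refine jsr_le_of_norm_wordRow_le hk0 (by positivity) ?_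
    rw [← sub_smul_dslope_of_zero hf0 z, sub_zero, wordRow_smul, norm_smul, norm_pow,
      div_eq_mul_inv, mul_pow]
    gcongr
    exact hk z (mem_closedBall_zero_iff.2 hr.1.le)
  · refine le_of_forall_mem_Ioo_le_div zero_lt_one fun r hr => ?_
    obtain ⟨k, hk0, hk⟩ := exists_norm_wordRow_dslope_le hf hf0 hρ hr.1 hr.2
    rw [← dslope_same, one_div]
    exact jsr_le_of_norm_wordRow_le hk0 (inv_nonneg.2 hr.1.le)
      (hk 0 (mem_closedBall_self hr.1.le))
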